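/- Suppose G has no loops and contains an independent set of size k, i.e., k distinct vertices that are pairwise non-adjacent in G. Then P(S^n_{(n−k)+}) is closed. -/

import Mathlib

open Matrix

/-- PSD matrices of rank at most `r`, indexed by a finite type. -/
def psdRank (ι : Type) [Fintype ι] [DecidableEq ι] (r : ℕ) : Set (Matrix ι ι ℝ) :=
  {X | X.PosSemidef ∧ X.rank ≤ r}

/-- Coordinate projection onto the entries indexed by `E`. -/
def proj {n : ℕ} (E : Set (Fin n × Fin n)) (X : Matrix (Fin n) (Fin n) ℝ) : E → ℝ :=
  fun p => X p.1.1 p.1.2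

/-- The simple graph underlying the index set `E` (loops discarded). -/
def graphOf {n : ℕ} (E : Set (Fin n × Fin n)) : SimpleGraph (Fin n) where
  Adj i j := i ≠ j ∧ ((i, j) ∈ E ∨ (j, i) ∈ E)
  symm := by
    refine ⟨fun i j h => ?_⟩
    exact ⟨h.1.symm, h.2.symm⟩
  loopless := by
    refine ⟨fun i h => ?_⟩
    exact h.1 rfl

/-!
The projection is in fact onto `ℝ^E`. Extend the edge data `a` to a symmetric matrix and let
`T` be the complement of the independent set `S`. Shifting the `T × T` block by a multiple of
the identity makes it a positive definite matrix `A` without changing off-diagonal entries.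
Take the standard basis vectors for the vertices of `T` and `A⁻¹ bₛ` for `s ∈ S`, where `bₛ` is
the column of `s` restricted to `T`: their Gram matrix for the form `A` is positive
semidefinite of rank at most `|T| = n - k` and reproduces `a` on every edge, as no edge lies
inside `S`.
-/

theorem Matrix.IsHermitian.exists_posDef_add_smul_one {ι : Type*} [Fintype ι] [DecidableEq ι]
    {M : Matrix ι ι ℝ} (hM : M.IsHermitian) : ∃ c : ℝ, (M + c • 1).PosDef := by
  obtain ⟨b, hb⟩ := (finite_real_spectrum (A := M)).bddBelow
  refine ⟨1 - b, ?_⟩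
  have hA : (M + (1 - b) • (1 : Matrix ι ι ℝ)).IsHermitian :=
    hM.add (isHermitian_one.smul (IsSelfAdjoint.all _))
  rw [hA.posDef_iff_eigenvalues_pos]
  intro i
  set μ := hA.eigenvalues i
  have h : (μ - (1 - b)) + (1 - b) ∈ spectrum ℝ (algebraMap ℝ _ (1 - b) + M) := by
    rw [sub_add_cancel, Algebra.algebraMap_eq_smul_one, add_comm]
    exact hA.eigenvalues_mem_spectrum_real i
  linarith [hb (spectrum.add_mem_add_iff.mp h)]

theorem Matrix.IsHermitian.exists_posSemidef_rank_le_completion {ι : Type*} [Fintype ι]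
    [DecidableEq ι] {a : Matrix ι ι ℝ} (ha : a.IsHermitian) (S : Finset ι) :
    ∃ X : Matrix ι ι ℝ, X.PosSemidef ∧ X.rank ≤ Fintype.card ι - S.card ∧
      ∀ i j, i ≠ j → (i ∉ S ∨ j ∉ S) → X i j = a i j := by
  obtain ⟨c, hA⟩ := (ha.submatrix (Subtype.val : {u // u ∉ S} → ι)).exists_posDef_add_smul_one
  set A := a.submatrix Subtype.val Subtype.val + c • (1 : Matrix {u // u ∉ S} {u // u ∉ S} ℝ)
  have hAinv : A * A⁻¹ = 1 := mul_nonsing_inv A ((isUnit_iff_isUnit_det A).mp hA.isUnit)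
  let f : ι → {u // u ∉ S} → ℝ := fun i =>
    if h : i ∈ S then A⁻¹ *ᵥ fun u => a u i else Pi.single ⟨i, h⟩ 1
  let F : Matrix ι {u // u ∉ S} ℝ := Matrix.of f
  have hXpsd : (F * A * Fᴴ).PosSemidef := hA.posSemidef.mul_mul_conjTranspose_same F
  have hrow : ∀ i ∉ S, ∀ j, j ≠ i → (F * A * Fᴴ) i j = a i j := by
    intro i hi j hji
    have hX : (F * A * Fᴴ) i j = f i ⬝ᵥ (A *ᵥ f j) := by rw [dotProduct_mulVec]; rfl
    rw [hX]
    simp only [f, dif_neg hi, single_dotProduct, one_mul]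
    by_cases hj : j ∈ S
    · rw [dif_pos hj, mulVec_mulVec, hAinv, one_mulVec]
    · have hne : (⟨i, hi⟩ : {u // u ∉ S}) ≠ ⟨j, hj⟩ := fun h => hji (congrArg Subtype.val h).symm
      simp [dif_neg hj, mulVec_single, A, one_apply_ne hne]
  refine ⟨F * A * Fᴴ, hXpsd, ?_, ?_⟩
  · calc (F * A * Fᴴ).rank ≤ F.rank := (rank_mul_le_left _ _).trans (rank_mul_le_left _ _)
      _ ≤ Fintype.card {u // u ∉ S} := rank_le_card_width F
      _ = Fintype.card ι - S.card := by simp [Fintype.card_subtype_compl]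
  · rintro i j hij (hi | hj)
    · exact hrow i hi j hij.symm
    · rw [← hXpsd.isHermitian.apply, hrow j hj i hij, ← ha.apply]
      simp

open Classical in
noncomputable def edgeMatrix {ι : Type*} (E : Set (ι × ι)) (a : E → ℝ) : Matrix ι ι ℝ :=
  Matrix.of fun i j =>
    if h : (i, j) ∈ E then a ⟨(i, j), h⟩ else if h' : (j, i) ∈ E then a ⟨(j, i), h'⟩ else 0

theorem edgeMatrix_apply_of_mem {ι : Type*} {E : Set (ι × ι)} (a : E → ℝ) (p : E) :
    edgeMatrix E a p.1.1 p.1.2 = a p := by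
  simp [edgeMatrix]

theorem edgeMatrix_isHermitian {ι : Type*} {E : Set (ι × ι)}
    (hE : ∀ i j, (i, j) ∈ E → (j, i) ∈ E → i = j) (a : E → ℝ) :
    (edgeMatrix E a).IsHermitian := by
  refine IsHermitian.ext fun i j => ?_
  by_cases hij : i = j
  · subst hij; rfl
  by_cases h : (i, j) ∈ E <;> by_cases h' : (j, i) ∈ E
  · exact absurd (hE i j h h') hij
  all_goals simp [edgeMatrix, h, h']

theorem proj_image_psdRank_eq_univ {n : ℕ} {E : Set (Fin n × Fin n)}
    (hup : ∀ p ∈ E, p.1 ≤ p.2) (hloop : ∀ v : Fin n, (v, v) ∉ E) {S : Finset (Fin n)}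
    (hind : ∀ i ∈ S, ∀ j ∈ S, i ≠ j → (i, j) ∉ E ∧ (j, i) ∉ E) :
    proj E '' psdRank (Fin n) (n - S.card) = Set.univ := by
  refine Set.eq_univ_of_forall fun a => ?_
  have hE : ∀ i j, (i, j) ∈ E → (j, i) ∈ E → i = j :=
    fun i j h h' => le_antisymm (hup _ h) (hup _ h')
  obtain ⟨X, hX, hrank, hXa⟩ :=
    (edgeMatrix_isHermitian hE a).exists_posSemidef_rank_le_completion S
  refine ⟨X, ⟨hX, by simpa using hrank⟩, funext fun ⟨⟨i, j⟩, hp⟩ => ?_⟩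
  have hij : i ≠ j := fun h => hloop i (h ▸ hp)
  have hout : i ∉ S ∨ j ∉ S := by
    by_contra! h
    exact (hind i h.1 j h.2 hij).1 hp
  rw [proj, hXa i j hij hout]
  exact edgeMatrix_apply_of_mem a ⟨(i, j), hp⟩

theorem stmt15_general (n : ℕ) (E : Set (Fin n × Fin n))
    (hup : ∀ p ∈ E, p.1 ≤ p.2)
    (hloop : ∀ v : Fin n, (v, v) ∉ E)
    (k : ℕ) (S : Finset (Fin n)) (hcard : S.card = k)
    (hind : ∀ i ∈ S, ∀ j ∈ S, i ≠ j → (i, j) ∉ E ∧ (j, i) ∉ E) :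
    IsClosed (proj E '' psdRank (Fin n) (n - k)) := by
  subst hcard
  rw [proj_image_psdRank_eq_univ hup hloop hind]
  exact isClosed_univ

/-- If `G` has no loops and contains an independent set of
size `k`, then `P(Sⁿ₍ₙ₋ₖ₎₊)` is closed. -/
theorem stmt15 (n : ℕ) (hn : 2 ≤ n) (E : Set (Fin n × Fin n))
    (hup : ∀ p ∈ E, p.1 ≤ p.2)
    (hloop : ∀ v : Fin n, (v, v) ∉ E)
    (k : ℕ) (S : Finset (Fin n)) (hcard : S.card = k)
    (hind : ∀ i ∈ S, ∀ j ∈ S, i ≠ j → (i, j) ∉ E ∧ (j, i) ∉ E) :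
    IsClosed (proj E '' psdRank (Fin n) (n - k)) :=
  stmt15_general n E hup hloop k S hcard hind
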